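/- arXiv:1108.1505 — 2 statements merged into one kernel-verified Lean document; each statement's English description precedes it below -/
import Mathlib

section
/- Let X be a Poisson random variable with mean μ. Then Var(X | μ < X < b) is an increasing function of b for b > μ (over b with P(μ < X < b) > 0), and Var(X | a < X < μ) is a decreasing function of a for a < μ (over a with P(a < X < μ) > 0). -/
/-!
Conditioning on `Ioo a b` leaves the Poisson weights on a window of consecutive integers, and
these weights are log-concave. So it suffices that extending a log-concave window by one point at
either end raises the variance; by reflection, only the left end needs treatment. For a window
`{0, …, n - 1}` with tail sums `Tⱼ = ∑_{j ≤ k < n} v k`, the moments about `0` are `∑ Tₛ` and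
`∑ (2s - 1) Tₛ` (`s ≥ 1`), and dropping the point `0` lowers the variance as soon as
`T₀ T₁ ∑ (2s - 1) Tₛ ≤ (T₀ + T₁) (∑ Tₛ)²`. Tails of a log-concave sequence are log-concave, so
`T₀ T_{i+j} ≤ Tᵢ Tⱼ` and `T₁ T_{i+j-1} ≤ Tᵢ Tⱼ`; summing over `i, j ≥ 1` gives the inequality,
as `s` arises as `i + j - 1` in `s` ways and as `i + j` in `s - 1` ways.
-/

/-- Log-concavity on `{0, …, n - 1}`. Unlike `v (k - 1) * v (k + 1) ≤ v k ^ 2`, this form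
excludes internal zeros, so it survives cutting a sequence off to zero. -/
def IsLogConcaveOn (v : ℕ → ℝ) (n : ℕ) : Prop :=
  ∀ ⦃i j : ℕ⦄, i ≤ j → j + 1 < n → v i * v (j + 1) ≤ v (i + 1) * v j

namespace IsLogConcaveOn

open Finset

variable {v : ℕ → ℝ} {n N : ℕ}

lemma mul_le_mul_of_add_eq_of_le (hv : IsLogConcaveOn v n) {a b c d : ℕ} (hca : c ≤ a)
    (hab : a ≤ b) (hd : d < n) (hsum : c + d = a + b) : v c * v d ≤ v a * v b := by
  obtain ⟨k, rfl⟩ := Nat.exists_eq_add_of_le hca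
  induction k generalizing b with
  | zero => rw [show d = b by omega, add_zero]
  | succ k ih =>
    calc v c * v d ≤ v (c + k) * v (b + 1) := ih (b := b + 1) (by omega) (by omega) (by omega)
      _ ≤ v (c + k + 1) * v b := hv (by omega) (by omega)

lemma mul_le_mul_of_add_eq (hv : IsLogConcaveOn v n) {a b c d : ℕ} (hca : c ≤ a)
    (had : a ≤ d) (hd : d < n) (hsum : c + d = a + b) : v c * v d ≤ v a * v b := by
  rcases le_total a b with hab | hba
  · exact hv.mul_le_mul_of_add_eq_of_le hca hab hd hsum
  · rw [mul_comm (v a)]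
    exact hv.mul_le_mul_of_add_eq_of_le (by omega) hba hd (by omega)

lemma mono {m : ℕ} (hv : IsLogConcaveOn v n) (hmn : m ≤ n) : IsLogConcaveOn v m :=
  fun _ _ hij hj => hv hij (hj.trans_le hmn)

lemma comp_add_right (hv : IsLogConcaveOn v n) (a : ℕ) :
    IsLogConcaveOn (fun k => v (k + a)) (n - a) := by
  intro i j hij hj
  simpa only [Nat.add_right_comm _ 1 a] using hv (i := i + a) (j := j + a) (by omega) (by omega)

lemma comp_const_sub (hv : IsLogConcaveOn v (N + 1)) :
    IsLogConcaveOn (fun k => v (N - k)) (N + 1) := by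
  intro i j hij hj
  have := hv (i := N - (j + 1)) (j := N - (i + 1)) (by omega) (by omega)
  rw [show N - (j + 1) + 1 = N - j by omega, show N - (i + 1) + 1 = N - i by omega] at this
  linarith [mul_comm (v (N - i)) (v (N - (j + 1))), mul_comm (v (N - (i + 1))) (v (N - j))]

lemma tails (hv : IsLogConcaveOn v n) (hnn : ∀ k, 0 ≤ v k) (N : ℕ) :
    IsLogConcaveOn (fun j => ∑ k ∈ Ico j n, v k) N := by
  intro i j hij _
  dsimp only
  have htail_nn : ∀ j, 0 ≤ ∑ k ∈ Ico j n, v k := fun j => sum_nonneg fun k _ => hnn k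
  by_cases hj : j + 1 < n
  swap
  · rw [Ico_eq_empty_of_le (show n ≤ j + 1 by omega), sum_empty, mul_zero]
    exact mul_nonneg (htail_nn _) (htail_nn _)
  have key : v i * ∑ k ∈ Ico (j + 1) n, v k ≤ v j * ∑ k ∈ Ico (i + 1) n, v k := by
    rw [sum_Ico_eq_sum_range, sum_Ico_eq_sum_range, mul_sum, mul_sum]
    calc ∑ t ∈ range (n - (j + 1)), v i * v (j + 1 + t)
        ≤ ∑ t ∈ range (n - (j + 1)), v j * v (i + 1 + t) :=
          sum_le_sum fun t ht => by
            rw [mem_range] at ht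
            exact hv.mul_le_mul_of_add_eq hij (by omega) (by omega) (by omega)
      _ ≤ ∑ t ∈ range (n - (i + 1)), v j * v (i + 1 + t) :=
          sum_le_sum_of_subset_of_nonneg (range_subset_range.2 (by omega))
            fun t _ _ => mul_nonneg (hnn _) (hnn _)
  rw [sum_eq_sum_Ico_succ_bot (show i < n by omega),
    sum_eq_sum_Ico_succ_bot (show j < n by omega)]
  linarith

lemma of_succ_eq_mul {r : ℕ → ℝ} (hv : ∀ k, 0 ≤ v k) (hr : Antitone r)
    (hsucc : ∀ k, v (k + 1) = r k * v k) (n : ℕ) : IsLogConcaveOn v n := by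
  intro i j hij _
  rw [hsucc, hsucc]
  calc v i * (r j * v j) = r j * (v i * v j) := by ring
    _ ≤ r i * (v i * v j) := mul_le_mul_of_nonneg_right (hr hij) (mul_nonneg (hv i) (hv j))
    _ = r i * v i * v j := by ring

end IsLogConcaveOn

section

open Finset

lemma sum_Ico_le_sum_Ico_one_add {g : ℕ → ℝ} (hg : ∀ k, 0 ≤ g k) (c n : ℕ) :
    ∑ s ∈ Ico (c + 1) n, g s ≤ ∑ j ∈ Ico 1 n, g (j + c) := by
  rw [sum_Ico_add' g 1 n c, add_comm 1 c]
  exact sum_le_sum_of_subset_of_nonneg (Ico_subset_Ico le_rfl (by omega)) fun k _ _ => hg k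

lemma sum_Ico_odd_mul_eq (g : ℕ → ℝ) (n : ℕ) :
    ∑ s ∈ Ico 1 n, (2 * (s : ℝ) - 1) * g s =
      ∑ i ∈ Ico 1 n, (∑ s ∈ Ico i n, g s + ∑ s ∈ Ico (i + 1) n, g s) := by
  rw [sum_add_distrib, sum_Ico_Ico_comm, sum_Ico_Ico_comm', ← sum_add_distrib]
  refine sum_congr rfl fun s hs => ?_
  rw [mem_Ico] at hs
  simp only [sum_const, Nat.card_Ico, nsmul_eq_mul]
  push_cast [Nat.cast_sub hs.1]
  ring

lemma IsLogConcaveOn.mul_sum_odd_mul_le {T : ℕ → ℝ} (hT : ∀ N, IsLogConcaveOn T N)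
    (hnn : ∀ k, 0 ≤ T k) (n : ℕ) :
    T 0 * T 1 * ∑ s ∈ Ico 1 n, (2 * (s : ℝ) - 1) * T s ≤
      (T 0 + T 1) * (∑ s ∈ Ico 1 n, T s) ^ 2 := by
  have hpair : ∀ i ∈ Ico 1 n, ∀ j ∈ Ico 1 n,
      T 0 * T 1 * (T (j + (i - 1)) + T (j + i)) ≤ (T 0 + T 1) * (T i * T j) := by
    intro i hi j hj
    rw [mem_Ico] at hi hj
    have h₁ : T 1 * T (j + (i - 1)) ≤ T i * T j :=
      (hT _).mul_le_mul_of_add_eq hi.1 (by omega) (Nat.lt_succ_self _) (by omega)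
    have h₀ : T 0 * T (j + i) ≤ T i * T j :=
      (hT _).mul_le_mul_of_add_eq (Nat.zero_le i) (by omega) (Nat.lt_succ_self _) (by omega)
    nlinarith [hnn 0, hnn 1]
  calc T 0 * T 1 * ∑ s ∈ Ico 1 n, (2 * (s : ℝ) - 1) * T s
      ≤ T 0 * T 1 * ∑ i ∈ Ico 1 n, ∑ j ∈ Ico 1 n, (T (j + (i - 1)) + T (j + i)) := by
        rw [sum_Ico_odd_mul_eq]
        refine mul_le_mul_of_nonneg_left (sum_le_sum fun i hi => ?_)
          (mul_nonneg (hnn 0) (hnn 1))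
        rw [mem_Ico] at hi
        rw [sum_add_distrib]
        refine add_le_add ?_ (sum_Ico_le_sum_Ico_one_add hnn i n)
        simpa only [Nat.sub_add_cancel hi.1] using sum_Ico_le_sum_Ico_one_add hnn (i - 1) n
    _ = ∑ i ∈ Ico 1 n, ∑ j ∈ Ico 1 n, T 0 * T 1 * (T (j + (i - 1)) + T (j + i)) := by
        simp only [mul_sum]
    _ ≤ ∑ i ∈ Ico 1 n, ∑ j ∈ Ico 1 n, (T 0 + T 1) * (T i * T j) :=
        sum_le_sum fun i hi => sum_le_sum fun j hj => hpair i hi j hj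
    _ = (T 0 + T 1) * (∑ s ∈ Ico 1 n, T s) ^ 2 := by
        rw [sq, sum_mul_sum, mul_sum]
        simp only [mul_sum]

noncomputable def weightedVariance {ι : Type*} (s : Finset ι) (p x : ι → ℝ) : ℝ :=
  (∑ i ∈ s, p i * x i ^ 2) / (∑ i ∈ s, p i) - ((∑ i ∈ s, p i * x i) / ∑ i ∈ s, p i) ^ 2

section WeightedVariance

variable {ι : Type*} (s : Finset ι) (p x : ι → ℝ)

lemma weightedVariance_mul_add (a c : ℝ) :
    weightedVariance s p (fun i => a * x i + c) = a ^ 2 * weightedVariance s p x := by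
  have h₁ : ∑ i ∈ s, p i * (a * x i + c) = a * ∑ i ∈ s, p i * x i + c * ∑ i ∈ s, p i := by
    simp only [mul_sum, ← sum_add_distrib]
    exact sum_congr rfl fun i _ => by ring
  have h₂ : ∑ i ∈ s, p i * (a * x i + c) ^ 2 = a ^ 2 * ∑ i ∈ s, p i * x i ^ 2 +
      2 * a * c * ∑ i ∈ s, p i * x i + c ^ 2 * ∑ i ∈ s, p i := by
    simp only [mul_sum, ← sum_add_distrib]
    exact sum_congr rfl fun i _ => by ring
  unfold weightedVariance
  rw [h₁, h₂]
  by_cases hS : ∑ i ∈ s, p i = 0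
  · simp [hS]
  · field_simp
    ring

lemma weightedVariance_add_const (c : ℝ) :
    weightedVariance s p (fun i => x i + c) = weightedVariance s p x := by
  simpa using weightedVariance_mul_add s p x 1 c

lemma weightedVariance_const_sub (c : ℝ) :
    weightedVariance s p (fun i => c - x i) = weightedVariance s p x := by
  simpa [neg_add_eq_sub] using weightedVariance_mul_add s p x (-1) c

lemma weightedVariance_eq_inv_mul_sum :
    weightedVariance s p x = (∑ i ∈ s, p i)⁻¹ *
      ∑ i ∈ s, p i * (x i - (∑ j ∈ s, p j)⁻¹ * ∑ j ∈ s, p j * x j) ^ 2 := by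
  unfold weightedVariance
  set S := ∑ i ∈ s, p i
  set m := S⁻¹ * ∑ j ∈ s, p j * x j
  have hexpand : ∑ i ∈ s, p i * (x i - m) ^ 2 =
      ∑ i ∈ s, p i * x i ^ 2 - 2 * m * ∑ i ∈ s, p i * x i + m ^ 2 * S := by
    simp only [S, mul_sum, ← sum_sub_distrib, ← sum_add_distrib]
    exact sum_congr rfl fun i _ => by ring
  rw [hexpand]
  by_cases hS : S = 0
  · simp [m, hS]
  · simp only [m]
    field_simp
    ring

end WeightedVariance

lemma weightedVariance_Ico_add (p : ℕ → ℝ) (a b c : ℕ) :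
    weightedVariance (Ico (a + c) (b + c)) p (↑) =
      weightedVariance (Ico a b) (fun k => p (k + c)) (↑) := by
  rw [← weightedVariance_add_const (Ico a b) _ _ (c : ℝ)]
  simp only [weightedVariance, ← Nat.cast_add, sum_Ico_add' p,
    sum_Ico_add' fun k => p k * (k : ℝ), sum_Ico_add' fun k => p k * (k : ℝ) ^ 2]

lemma weightedVariance_Ico_reflect (p : ℕ → ℝ) {k m N : ℕ} (h : m ≤ N + 1) :
    weightedVariance (Ico (N + 1 - m) (N + 1 - k)) p (↑) =
      weightedVariance (Ico k m) (fun j => p (N - j)) (↑) := by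
  have hsum (f : ℕ → ℝ → ℝ) : ∑ j ∈ Ico (N + 1 - m) (N + 1 - k), f j j =
      ∑ j ∈ Ico k m, f (N - j) ((N : ℝ) - j) := by
    rw [← sum_Ico_reflect _ k h]
    refine sum_congr rfl fun j hj => ?_
    rw [mem_Ico] at hj
    rw [Nat.cast_sub (by omega)]
  rw [← weightedVariance_const_sub (Ico k m) _ _ (N : ℝ)]
  simp only [weightedVariance, hsum fun j y => p j * y ^ 2, hsum fun j y => p j * y,
    hsum fun j _ => p j]

lemma sum_Ico_one_odd (k : ℕ) : ∑ s ∈ Ico 1 (k + 1), (2 * (s : ℝ) - 1) = (k : ℝ) ^ 2 := by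
  induction k with
  | zero => simp
  | succ k ih =>
    rw [sum_Ico_succ_top (by omega), ih]
    push_cast
    ring

lemma div_sub_div_sq_le {M₁ M₂ s s' : ℝ} (hs : 0 < s) (hss' : s ≤ s')
    (h : s * s' * M₂ ≤ (s + s') * M₁ ^ 2) :
    M₂ / s - (M₁ / s) ^ 2 ≤ M₂ / s' - (M₁ / s') ^ 2 := by
  have hs' : 0 < s' := hs.trans_le hss'
  rw [← sub_nonneg]
  have key : M₂ / s' - (M₁ / s') ^ 2 - (M₂ / s - (M₁ / s) ^ 2) =
      (s' - s) * ((s + s') * M₁ ^ 2 - s * s' * M₂) / (s ^ 2 * s' ^ 2) := by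
    field_simp
    ring
  rw [key]
  exact div_nonneg (mul_nonneg (by linarith) (by linarith)) (by positivity)

theorem IsLogConcaveOn.weightedVariance_Ico_one_le {v : ℕ → ℝ} {n : ℕ}
    (hv : IsLogConcaveOn v n) (hnn : ∀ k, 0 ≤ v k) (hS : 0 < ∑ k ∈ Ico 1 n, v k) :
    weightedVariance (Ico 1 n) v (↑) ≤ weightedVariance (range n) v (↑) := by
  set T : ℕ → ℝ := fun j => ∑ k ∈ Ico j n, v k with hT
  have hn : 0 < n := by
    by_contra! h
    simp [Nat.le_zero.1 h] at hS
  have hmoment (f : ℕ → ℝ) :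
      ∑ k ∈ Ico 1 n, v k * ∑ s ∈ Ico 1 (k + 1), f s = ∑ s ∈ Ico 1 n, f s * T s := by
    simp only [hT, mul_sum]
    rw [sum_Ico_Ico_comm]
    exact sum_congr rfl fun k _ => sum_congr rfl fun s _ => mul_comm _ _
  have hM₁ : ∑ k ∈ Ico 1 n, v k * (k : ℝ) = ∑ s ∈ Ico 1 n, T s := by
    simpa using hmoment 1
  have hM₂ : ∑ k ∈ Ico 1 n, v k * (k : ℝ) ^ 2 = ∑ s ∈ Ico 1 n, (2 * (s : ℝ) - 1) * T s := by
    simpa only [sum_Ico_one_odd] using hmoment fun s => 2 * (s : ℝ) - 1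
  have hrange (f : ℕ → ℝ) (hf : f 0 = 0) : ∑ k ∈ range n, f k = ∑ k ∈ Ico 1 n, f k := by
    rw [sum_range_eq_add_Ico f hn, hf, zero_add]
  have hT₀ : ∑ k ∈ range n, v k = v 0 + T 1 := sum_range_eq_add_Ico v hn
  unfold weightedVariance
  rw [hT₀, hrange _ (by simp), hrange _ (by simp), hM₁, hM₂]
  refine div_sub_div_sq_le hS (le_add_of_nonneg_left (hnn 0)) ?_
  have key : T 0 * T 1 * ∑ s ∈ Ico 1 n, (2 * (s : ℝ) - 1) * T s ≤
      (T 0 + T 1) * (∑ s ∈ Ico 1 n, T s) ^ 2 :=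
    IsLogConcaveOn.mul_sum_odd_mul_le (hv.tails hnn) (fun j => sum_nonneg fun k _ => hnn k) n
  rw [show T 0 = v 0 + T 1 from sum_eq_sum_Ico_succ_bot hn v] at key
  change T 1 * (v 0 + T 1) * _ ≤ (T 1 + (v 0 + T 1)) * _
  linarith

section Window

variable {w : ℕ → ℝ} {a b : ℕ}

lemma sum_Ico_pos (hw : ∀ k, 0 < w k) (hab : a < b) : 0 < ∑ k ∈ Ico a b, w k :=
  sum_pos (fun k _ => hw k) (nonempty_Ico.2 hab)

lemma IsLogConcaveOn.weightedVariance_Ico_succ_le (hlc : IsLogConcaveOn w b)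
    (hw : ∀ k, 0 < w k) (hab : a + 1 < b) :
    weightedVariance (Ico (a + 1) b) w (↑) ≤ weightedVariance (Ico a b) w (↑) := by
  obtain ⟨n, rfl⟩ : ∃ n, b = n + a := ⟨b - a, by omega⟩
  have hv := hlc.comp_add_right a
  rw [Nat.add_sub_cancel] at hv
  rw [add_comm a 1, show Ico a (n + a) = Ico (0 + a) (n + a) by rw [zero_add],
    weightedVariance_Ico_add, weightedVariance_Ico_add, Nat.Ico_zero_eq_range]
  exact hv.weightedVariance_Ico_one_le (fun k => (hw _).le)
    (sum_Ico_pos (fun k => hw _) (by omega))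

lemma IsLogConcaveOn.weightedVariance_Ico_le_succ (hlc : IsLogConcaveOn w (b + 1))
    (hw : ∀ k, 0 < w k) (hab : a < b) :
    weightedVariance (Ico a b) w (↑) ≤ weightedVariance (Ico a (b + 1)) w (↑) := by
  have hm : b + 1 - a ≤ b + 1 := Nat.sub_le _ _
  have h₀ := weightedVariance_Ico_reflect w (k := 0) hm
  have h₁ := weightedVariance_Ico_reflect w (k := 1) hm
  rw [Nat.sub_sub_self (by omega), Nat.sub_zero] at h₀
  rw [Nat.sub_sub_self (by omega), Nat.add_sub_cancel] at h₁
  rw [h₀, h₁, Nat.Ico_zero_eq_range]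
  exact hlc.comp_const_sub.mono hm |>.weightedVariance_Ico_one_le (fun k => (hw _).le)
    (sum_Ico_pos (fun k => hw _) (by omega))

theorem IsLogConcaveOn.weightedVariance_Ico_mono {a' b' : ℕ} (hlc : IsLogConcaveOn w b')
    (hw : ∀ k, 0 < w k) (ha : a' ≤ a) (hab : a < b) (hb : b ≤ b') :
    weightedVariance (Ico a b) w (↑) ≤ weightedVariance (Ico a' b') w (↑) := by
  have hright : ∀ c, b ≤ c → c ≤ b' →
      weightedVariance (Ico a b) w (↑) ≤ weightedVariance (Ico a c) w (↑) := by
    intro c hbc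
    induction c, hbc using Nat.le_induction with
    | base => exact fun _ => le_rfl
    | succ c hbc ih =>
      exact fun hc => (ih (by omega)).trans
        ((hlc.mono hc).weightedVariance_Ico_le_succ hw (by omega))
  have hleft : ∀ k ≤ a,
      weightedVariance (Ico a b') w (↑) ≤ weightedVariance (Ico (a - k) b') w (↑) := by
    intro k
    induction k with
    | zero => exact fun _ => le_rfl
    | succ k ih =>
      intro hk
      calc weightedVariance (Ico a b') w (↑) ≤ weightedVariance (Ico (a - k) b') w (↑) :=
            ih (by omega)
        _ = weightedVariance (Ico (a - (k + 1) + 1) b') w (↑) := by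
            rw [show a - (k + 1) + 1 = a - k by omega]
        _ ≤ weightedVariance (Ico (a - (k + 1)) b') w (↑) :=
            hlc.weightedVariance_Ico_succ_le hw (by omega)
  calc weightedVariance (Ico a b) w (↑) ≤ weightedVariance (Ico a b') w (↑) :=
        hright b' hb le_rfl
    _ ≤ weightedVariance (Ico (a - (a - a')) b') w (↑) := hleft _ (Nat.sub_le _ _)
    _ = weightedVariance (Ico a' b') w (↑) := by rw [Nat.sub_sub_self ha]

end Window

end

open MeasureTheory ProbabilityTheory Set

section DiscreteMeasure

variable {w : ℕ → ℝ} {μ : Measure ℝ} {I : Set ℝ} {F : Finset ℕ}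

lemma restrict_eq_sum_dirac
    (hμ : μ = Measure.sum fun k : ℕ => ENNReal.ofReal (w k) • Measure.dirac (k : ℝ))
    (hI : MeasurableSet I) (hF : ∀ k : ℕ, (k : ℝ) ∈ I ↔ k ∈ F) :
    μ.restrict I = ∑ k ∈ F, ENNReal.ofReal (w k) • Measure.dirac (k : ℝ) := by
  classical
  have hdirac (k : ℕ) : (ENNReal.ofReal (w k) • Measure.dirac (k : ℝ)).restrict I =
      if k ∈ F then ENNReal.ofReal (w k) • Measure.dirac (k : ℝ) else 0 := by
    rw [Measure.restrict_smul, restrict_dirac' hI]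
    simp only [hF]
    split_ifs <;> simp
  ext s hs
  rw [hμ, Measure.restrict_sum_of_countable, Measure.sum_apply _ hs,
    Measure.finsetSum_apply, tsum_eq_sum (s := F) fun k hk => by simp [hdirac, hk]]
  exact Finset.sum_congr rfl fun k hk => by simp [hdirac, hk]

lemma measure_eq_sum
    (hμ : μ = Measure.sum fun k : ℕ => ENNReal.ofReal (w k) • Measure.dirac (k : ℝ))
    (hI : MeasurableSet I) (hF : ∀ k : ℕ, (k : ℝ) ∈ I ↔ k ∈ F) :
    μ I = ∑ k ∈ F, ENNReal.ofReal (w k) := by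
  rw [← Measure.restrict_apply_univ, restrict_eq_sum_dirac hμ hI hF, Measure.finsetSum_apply]
  simp

lemma integral_cond_eq
    (hμ : μ = Measure.sum fun k : ℕ => ENNReal.ofReal (w k) • Measure.dirac (k : ℝ))
    (hI : MeasurableSet I) (hF : ∀ k : ℕ, (k : ℝ) ∈ I ↔ k ∈ F)
    (hw : ∀ k, 0 ≤ w k) (f : ℝ → ℝ) :
    ∫ x, f x ∂μ[|I] = (∑ k ∈ F, w k)⁻¹ * ∑ k ∈ F, w k * f k := by
  have hmass : (μ I).toReal = ∑ k ∈ F, w k := by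
    rw [measure_eq_sum hμ hI hF, ENNReal.toReal_sum fun _ _ => ENNReal.ofReal_ne_top]
    simp [hw]
  rw [ProbabilityTheory.cond, integral_smul_measure, ENNReal.toReal_inv, hmass,
    restrict_eq_sum_dirac hμ hI hF, integral_finsetSum_measure fun k _ =>
      (integrable_dirac enorm_lt_top).smul_measure ENNReal.ofReal_ne_top]
  simp [integral_smul_measure, hw]

lemma variance_cond_eq_weightedVariance
    (hμ : μ = Measure.sum fun k : ℕ => ENNReal.ofReal (w k) • Measure.dirac (k : ℝ))
    (hI : MeasurableSet I) (hF : ∀ k : ℕ, (k : ℝ) ∈ I ↔ k ∈ F)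
    (hw : ∀ k, 0 ≤ w k) :
    variance id μ[|I] = weightedVariance F w (↑) := by
  rw [variance_eq_integral measurable_id.aemeasurable, weightedVariance_eq_inv_mul_sum]
  simp only [id, integral_cond_eq hμ hI hF hw]

end DiscreteMeasure

lemma natCast_mem_Ioo_iff (a b : ℝ) (k : ℕ) :
    (k : ℝ) ∈ Ioo a b ↔ k ∈ Finset.Ico (⌊a⌋ + 1).toNat ⌈b⌉₊ := by
  rw [mem_Ioo, Finset.mem_Ico, ← Nat.lt_ceil, ← Int.cast_natCast, ← Int.floor_lt]
  omega

theorem variance_cond_Ioo_le_of_isLogConcaveOn {w : ℕ → ℝ} {μ : Measure ℝ}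
    (hw : ∀ k, 0 < w k) (hlc : ∀ n, IsLogConcaveOn w n)
    (hμ : μ = Measure.sum fun k : ℕ => ENNReal.ofReal (w k) • Measure.dirac (k : ℝ))
    {a a' b b' : ℝ} (hpos : 0 < μ (Ioo a b)) (ha : a' ≤ a) (hb : b ≤ b') :
    variance id μ[|Ioo a b] ≤ variance id μ[|Ioo a' b'] := by
  have hw' : ∀ k, 0 ≤ w k := fun k => (hw k).le
  rw [variance_cond_eq_weightedVariance hμ measurableSet_Ioo (natCast_mem_Ioo_iff a b) hw',
    variance_cond_eq_weightedVariance hμ measurableSet_Ioo (natCast_mem_Ioo_iff a' b') hw']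
  have hne : (⌊a⌋ + 1).toNat < ⌈b⌉₊ := by
    by_contra! h
    rw [measure_eq_sum hμ measurableSet_Ioo (natCast_mem_Ioo_iff a b),
      Finset.Ico_eq_empty_of_le h, Finset.sum_empty] at hpos
    exact hpos.ne rfl
  exact (hlc _).weightedVariance_Ico_mono hw
    (Int.toNat_le_toNat (by gcongr)) hne (Nat.ceil_mono hb)

lemma poisson_succ (m : ℝ) (k : ℕ) :
    Real.exp (-m) * m ^ (k + 1) / ((k + 1).factorial : ℝ) =
      m / (k + 1) * (Real.exp (-m) * m ^ k / (k.factorial : ℝ)) := by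
  rw [Nat.factorial_succ, pow_succ]
  push_cast
  field_simp

lemma isLogConcaveOn_poisson {m : ℝ} (hm : 0 ≤ m) (n : ℕ) :
    IsLogConcaveOn (fun k => Real.exp (-m) * m ^ k / (k.factorial : ℝ)) n :=
  .of_succ_eq_mul (fun k => by positivity)
    (fun i j hij => div_le_div_of_nonneg_left hm (by positivity) (by gcongr))
    (poisson_succ m) n

/-- Let `X` be Poisson with mean `m > 0`. Then
`Var(X | m < X < b)` is increasing in `b` over `{b > m : P(m < X < b) > 0}`, and
`Var(X | a < X < m)` is decreasing in `a` over `{a < m : P(a < X < m) > 0}`. -/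
theorem poisson_conditional_variance_monotone
    (m : ℝ) (hm : 0 < m)
    (μ : Measure ℝ)
    (hμ : μ = Measure.sum (fun k : ℕ =>
      ENNReal.ofReal (Real.exp (-m) * m ^ k / (Nat.factorial k : ℝ)) •
        Measure.dirac (k : ℝ))) :
    MonotoneOn (fun b => variance id (μ[|Ioo m b]))
      {b : ℝ | m < b ∧ 0 < μ (Ioo m b)} ∧
    AntitoneOn (fun a => variance id (μ[|Ioo a m]))
      {a : ℝ | a < m ∧ 0 < μ (Ioo a m)} := by
  have hle {a a' b b' : ℝ} (hpos : 0 < μ (Ioo a b)) (ha : a' ≤ a) (hb : b ≤ b') :=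
    variance_cond_Ioo_le_of_isLogConcaveOn (fun k => by positivity)
      (isLogConcaveOn_poisson hm.le) hμ hpos ha hb
  constructor
  · rintro b₁ ⟨-, hb₁⟩ b₂ - hb
    exact hle hb₁ le_rfl hb
  · rintro a₁ - a₂ ⟨-, ha₂⟩ ha
    exact hle ha₂ ha le_rfl
end

section
/- Let X₁ and X₂ be independent random variables each with a log-concave, differentiable density f, and for b > 0 with F(b) = P(0 < X < b) > 0 let g(u; b) = ∫ᵤᵇ f(x) f(x − u) dx / F(b)². Then g(u; b) is totally positive of order 2 in (u, b): for every u₁ < u₂ and b₁ < b₂ (with all arguments in the domain), g(u₁; b₁)·g(u₂; b₂) ≥ g(u₁; b₂)·g(u₂; b₁). -/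
open MeasureTheory Set

/-!
Log-concavity of `f` makes the kernel `(u, x) ↦ f x * f (x - u)` TP₂: for `x ≤ y` and
`u₁ ≤ u₂` the outer points `x - u₂, y - u₁` and the inner points `x - u₁, y - u₂` have the
same midpoint, so `f (x - u₂) * f (y - u₁) ≤ f (x - u₁) * f (y - u₂)`. Integrating over
`x ∈ [u₂, b₁]`, `y ∈ [b₁, b₂]` gives the TP₂ inequality for the numerator of `g` once the
integrals over `[u₁, b₂]` are split at `b₁`; the denominators `F(b)²` agree on both sides.
-/

def IsLogConcave (f : ℝ → ℝ) : Prop :=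
  ∀ x y p q : ℝ, 0 ≤ p → 0 ≤ q → p + q = 1 → f x ^ p * f y ^ q ≤ f (p * x + q * y)

theorem IsLogConcave.mul_le_mul_of_add_eq {f : ℝ → ℝ} (hf : IsLogConcave f)
    (hf0 : ∀ x, 0 ≤ f x) {a b c d : ℝ} (hab : a ≤ b) (hac : a ≤ c)
    (hsum : a + d = b + c) :
    f a * f d ≤ f b * f c := by
  rcases hab.eq_or_lt with rfl | hlt
  · rw [show d = c by linarith]
  have hΔ : 0 < d - a := by linarith
  set p := (d - b) / (d - a)
  set q := (b - a) / (d - a)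
  have hp : 0 ≤ p := div_nonneg (by linarith) hΔ.le
  have hq : 0 ≤ q := div_nonneg (by linarith) hΔ.le
  have hpq : p + q = 1 := by rw [← add_div]; exact (div_eq_one_iff_eq hΔ.ne').2 (by ring)
  have hb : p * a + q * d = b := by simp only [p, q]; field_simp; ring
  have hc : q * a + p * d = c := by
    rw [show c = a + d - b by linarith]; simp only [p, q]; field_simp; ring
  have rpow_split : ∀ x : ℝ, 0 ≤ x → x ^ p * x ^ q = x := fun x hx => by
    rw [← Real.rpow_add' hx (by rw [hpq]; norm_num), hpq, Real.rpow_one]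
  calc f a * f d = (f a ^ p * f d ^ q) * (f a ^ q * f d ^ p) := by
        linear_combination
          (-(f d ^ p * f d ^ q)) * rpow_split _ (hf0 a) - f a * rpow_split _ (hf0 d)
    _ ≤ f b * f c := by
        rw [← hb, ← hc]
        exact mul_le_mul (hf a d p q hp hq hpq) (hf a d q p hq hp (by linarith))
          (mul_nonneg (Real.rpow_nonneg (hf0 _) _) (Real.rpow_nonneg (hf0 _) _)) (hf0 _)

theorem integral_mul_integral_le_of_forall_mul_le {φ ψ φ' ψ' : ℝ → ℝ} {a b c d : ℝ}
    (hab : a ≤ b) (hcd : c ≤ d) (hφ : IntervalIntegrable φ volume a b)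
    (hψ : IntervalIntegrable ψ volume c d) (hφ' : IntervalIntegrable φ' volume a b)
    (hψ' : IntervalIntegrable ψ' volume c d)
    (h : ∀ x ∈ Icc a b, ∀ y ∈ Icc c d, φ x * ψ y ≤ φ' x * ψ' y) :
    (∫ x in a..b, φ x) * (∫ y in c..d, ψ y) ≤
      (∫ x in a..b, φ' x) * (∫ y in c..d, ψ' y) := by
  rw [← intervalIntegral.integral_mul_const, ← intervalIntegral.integral_mul_const]
  refine intervalIntegral.integral_mono_on hab (hφ.mul_const _) (hφ'.mul_const _) fun x hx => ?_
  rw [← intervalIntegral.integral_const_mul, ← intervalIntegral.integral_const_mul]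
  exact intervalIntegral.integral_mono_on hcd (hψ.const_mul _) (hψ'.const_mul _) (h x hx)

theorem IsLogConcave.integral_mul_shift_TP2 {f : ℝ → ℝ} (hf : IsLogConcave f)
    (hf0 : ∀ x, 0 ≤ f x) (hc : Continuous f) {u₁ u₂ b₁ b₂ : ℝ}
    (hu : u₁ ≤ u₂) (hub : u₂ ≤ b₁) (hb : b₁ ≤ b₂) :
    (∫ x in u₁..b₂, f x * f (x - u₁)) * (∫ x in u₂..b₁, f x * f (x - u₂)) ≤
      (∫ x in u₁..b₁, f x * f (x - u₁)) * (∫ x in u₂..b₂, f x * f (x - u₂)) := by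
  set K : ℝ → ℝ → ℝ := fun u x => f x * f (x - u)
  have hK0 : ∀ u x, 0 ≤ K u x := fun u x => mul_nonneg (hf0 x) (hf0 _)
  have hKi : ∀ u a b, IntervalIntegrable (K u) volume a b := fun u a b =>
    (hc.mul (hc.comp (continuous_sub_right u))).intervalIntegrable a b
  have split : ∀ u a b c, (∫ x in a..c, K u x) = (∫ x in a..b, K u x) + ∫ x in b..c, K u x :=
    fun u a b c => (intervalIntegral.integral_add_adjacent_intervals (hKi u a b) (hKi u b c)).symm
  have kernel_TP2 : ∀ x y, x ≤ y → K u₂ x * K u₁ y ≤ K u₁ x * K u₂ y := fun x y hxy => by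
    have := hf.mul_le_mul_of_add_eq hf0 (a := x - u₂) (b := x - u₁) (c := y - u₂)
      (d := y - u₁) (by linarith) (by linarith) (by ring)
    simp only [K]
    linarith [mul_le_mul_of_nonneg_left this (mul_nonneg (hf0 x) (hf0 y))]
  have cross : (∫ x in u₂..b₁, K u₂ x) * (∫ y in b₁..b₂, K u₁ y) ≤
      (∫ x in u₂..b₁, K u₁ x) * (∫ y in b₁..b₂, K u₂ y) :=
    integral_mul_integral_le_of_forall_mul_le hub hb (hKi _ _ _) (hKi _ _ _) (hKi _ _ _)
      (hKi _ _ _) fun x hx y hy => kernel_TP2 x y (hx.2.trans hy.1)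
  have head_nonneg : 0 ≤ ∫ x in u₁..u₂, K u₁ x :=
    intervalIntegral.integral_nonneg hu fun x _ => hK0 _ x
  have tail_nonneg : 0 ≤ ∫ y in b₁..b₂, K u₂ y :=
    intervalIntegral.integral_nonneg hb fun y _ => hK0 _ y
  change (∫ x in u₁..b₂, K u₁ x) * (∫ x in u₂..b₁, K u₂ x) ≤
    (∫ x in u₁..b₁, K u₁ x) * (∫ x in u₂..b₂, K u₂ x)
  rw [split u₁ u₁ b₁ b₂, split u₂ u₂ b₁ b₂, split u₁ u₁ u₂ b₁]
  linarith [mul_nonneg head_nonneg tail_nonneg]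

theorem conditional_difference_density_TP2_general
    (f : ℝ → ℝ) (hf0 : ∀ x, 0 ≤ f x)
    (hlc : ∀ x y p q : ℝ, 0 ≤ p → 0 ≤ q → p + q = 1 →
      f x ^ p * f y ^ q ≤ f (p * x + q * y))
    (hdiff : Differentiable ℝ f)
    (F : ℝ → ℝ)
    (g : ℝ → ℝ → ℝ)
    (hg : ∀ u b, g u b = (∫ x in u..b, f x * f (x - u)) / (F b) ^ 2)
    (u₁ u₂ b₁ b₂ : ℝ) (hu : u₁ < u₂) (hub : u₂ ≤ b₁)
    (hb : b₁ < b₂) :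
    g u₁ b₂ * g u₂ b₁ ≤ g u₁ b₁ * g u₂ b₂ := by
  simp only [hg, div_mul_div_comm, mul_comm ((F b₂) ^ 2)]
  exact div_le_div_of_nonneg_right
    (IsLogConcave.integral_mul_shift_TP2 hlc hf0 hdiff.continuous hu.le hub hb.le) (by positivity)

/-- Let `X₁, X₂` be i.i.d. with log-concave differentiable density
`f`, `F x = P(0 < X < x)`, and `g u b = (∫ x in u..b, f x * f (x - u)) / F(b)²`.
Then `g` is totally positive of order 2 in `(u, b)`: for `0 ≤ u₁ < u₂ ≤ b₁ < b₂`
with `F b₁ > 0`, `g u₁ b₁ * g u₂ b₂ ≥ g u₁ b₂ * g u₂ b₁`. -/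
theorem conditional_difference_density_TP2
    (f : ℝ → ℝ) (hf0 : ∀ x, 0 ≤ f x) (hfint : ∫ x, f x = 1)
    (hlc : ∀ x y p q : ℝ, 0 ≤ p → 0 ≤ q → p + q = 1 →
      f x ^ p * f y ^ q ≤ f (p * x + q * y))
    (hdiff : Differentiable ℝ f)
    (F : ℝ → ℝ) (hF : ∀ x, F x = ∫ t in Ioo 0 x, f t)
    (g : ℝ → ℝ → ℝ)
    (hg : ∀ u b, g u b = (∫ x in u..b, f x * f (x - u)) / (F b) ^ 2)
    (u₁ u₂ b₁ b₂ : ℝ) (hu₁ : 0 ≤ u₁) (hu : u₁ < u₂) (hub : u₂ ≤ b₁)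
    (hb : b₁ < b₂) (hFb₁ : 0 < F b₁) :
    g u₁ b₂ * g u₂ b₁ ≤ g u₁ b₁ * g u₂ b₂ :=
  conditional_difference_density_TP2_general f hf0 hlc hdiff F g hg u₁ u₂ b₁ b₂ hu hub hb
end
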